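/- arXiv:2304.06830 — 2 statements merged into one kernel-verified Lean document; each statement's English description precedes it below -/
import Mathlib

section
/- Let K = [0,1] and φ : K → ℝ be concave, continuous, and strictly increasing. Suppose on some measurable space (Y,𝒜) there is a sub-σ-algebra ℬ, an event A ∈ ℬ with p := π(A) ∈ (0,1), and the functional I(ξ) = φ⁻¹(∫ φ(ξ) dπ) on bounded ℬ-measurable K-valued functions is translation invariant: I(ξ + c) = I(ξ) + c whenever ξ, ξ+c are in the domain. Then φ is, up to a positive affine transformation, either the identity or x ↦ −exp(−θx) for some θ > 0. -/
open MeasureTheory Set Filter Topology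
open scoped ENNReal

/-! Testing translation invariance on the two-point lottery `h • 𝟙_A` shows that its certainty
equivalent `k h` satisfies `φ (x + k h) - φ x = p * (φ (x + h) - φ x)` for every shift `x`.
Iterating `k` drives `h` to `0` while every increment `φ (x + ·) - φ x` shrinks by the same
factor `p`, so the ratio of the increments of `φ` at `x` and at `0` equals the ratio of the right
derivatives of the concave function `φ` there. Hence `φ (x + y) = α y * φ x + β y`; expanding
`φ (x + y)` in both orders forces `α = 1 + c * (φ - φ 0)`. So either `c = 0` and `φ - φ 0` is
additive, or `1 + c * (φ - φ 0)` is multiplicative; continuity makes it linear, resp. exponential,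
and concavity forces `c ≤ 0`, i.e. `θ > 0`. -/

lemma nonpos_of_continuousOn_of_map_add {g : ℝ → ℝ} (hg : ContinuousOn g (Icc 0 1))
    (hadd : ∀ x y, 0 ≤ x → 0 ≤ y → x + y ≤ 1 → g (x + y) = g x + g y) (h1 : g 1 = 0) :
    ∀ x ∈ Icc (0 : ℝ) 1, g x ≤ 0 := by
  obtain ⟨x₀, ⟨hx₀, hx₁⟩, hmax⟩ := isCompact_Icc.exists_isMaxOn (nonempty_Icc.2 zero_le_one) hg
  suffices g x₀ ≤ 0 from fun x hx => (hmax hx).trans this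
  -- At a maximum point `x₀` the value doubles: `g (2x₀) = 2 g x₀`, or else
  -- `g (2x₀ - 1) = 2 g x₀` because `g (1 - x₀) = - g x₀`.
  rcases le_or_gt x₀ (1 / 2) with hx | hx
  · have hdouble := hadd x₀ x₀ hx₀ hx₀ (by linarith)
    have hle : g (x₀ + x₀) ≤ g x₀ := hmax ⟨by linarith, by linarith⟩
    linarith
  · have hsplit := hadd (2 * x₀ - 1) (1 - x₀) (by linarith) (by linarith) (by linarith)
    have hone := hadd x₀ (1 - x₀) hx₀ (by linarith) (by linarith)
    rw [show 2 * x₀ - 1 + (1 - x₀) = x₀ by ring] at hsplit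
    rw [show x₀ + (1 - x₀) = 1 by ring, h1] at hone
    have hle : g (2 * x₀ - 1) ≤ g x₀ := hmax ⟨by linarith, by linarith⟩
    linarith

theorem eq_mul_of_continuousOn_of_map_add {f : ℝ → ℝ} (hf : ContinuousOn f (Icc 0 1))
    (hadd : ∀ x y, 0 ≤ x → 0 ≤ y → x + y ≤ 1 → f (x + y) = f x + f y) :
    ∀ x ∈ Icc (0 : ℝ) 1, f x = f 1 * x := by
  have hdev (s : ℝ) : ∀ x ∈ Icc (0 : ℝ) 1, s * (f x - f 1 * x) ≤ 0 := by
    refine nonpos_of_continuousOn_of_map_add (by fun_prop) (fun x y hx hy hxy => ?_) (by ring)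
    rw [hadd x y hx hy hxy]
    ring
  intro x hx
  linarith [hdev 1 x hx, hdev (-1) x hx]

theorem eq_exp_mul_of_continuousOn_of_map_add_eq_mul {F : ℝ → ℝ}
    (hF : ContinuousOn F (Icc 0 1)) (hpos : ∀ x ∈ Icc (0 : ℝ) 1, 0 < F x)
    (hmul : ∀ x y, 0 ≤ x → 0 ≤ y → x + y ≤ 1 → F (x + y) = F x * F y) :
    ∀ x ∈ Icc (0 : ℝ) 1, F x = Real.exp (Real.log (F 1) * x) := by
  have hlog := eq_mul_of_continuousOn_of_map_add (hF.log fun x hx => (hpos x hx).ne')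
    fun x y hx hy hxy => by
      rw [hmul x y hx hy hxy, Real.log_mul (hpos x ⟨hx, by linarith⟩).ne'
        (hpos y ⟨hy, by linarith⟩).ne']
  intro x hx
  rw [← hlog x hx, Real.exp_log (hpos x hx)]

theorem ConcaveOn.tendsto_slope_nhdsGT {s : Set ℝ} {f : ℝ → ℝ} {x y : ℝ} (hf : ConcaveOn ℝ s f)
    (hx : x ∈ s) (hxy : x < y) (hs : Ioo x y ⊆ s) (hbdd : BddAbove (slope f x '' Ioo x y)) :
    Tendsto (slope f x) (𝓝[>] x) (𝓝 (sSup (slope f x '' Ioo x y))) :=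
  ((hf.antitoneOn_slope_gt hx).mono fun _ hz => ⟨hs hz, hz.1⟩).tendsto_nhdsWithin_Ioo_right
    (nonempty_Ioo.2 hxy) hbdd

-- CARA: constant absolute risk aversion.
def IsAffineOrCARA (φ : ℝ → ℝ) : Prop :=
  ∃ α γ : ℝ, 0 < α ∧
    ((∀ x ∈ Icc (0 : ℝ) 1, φ x = α * x + γ) ∨
      ∃ θ : ℝ, 0 < θ ∧ ∀ x ∈ Icc (0 : ℝ) 1, φ x = α * (-Real.exp (-θ * x)) + γ)

section AffineOrCARA

variable {φ : ℝ → ℝ}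

lemma sub_apply_zero_pos (hmono : StrictMonoOn φ (Icc 0 1)) {x : ℝ} (hx : x ∈ Ioc (0 : ℝ) 1) :
    0 < φ x - φ 0 :=
  sub_pos.2 (hmono (left_mem_Icc.2 zero_le_one) (Ioc_subset_Icc_self hx) hx.1)

lemma nonpos_of_concaveOn_of_map_add (hconc : ConcaveOn ℝ (Icc 0 1) φ)
    (hmono : StrictMonoOn φ (Icc 0 1)) {c : ℝ}
    (hc : φ (1 / 2 + 1 / 2) - φ (1 / 2) = (1 + c * (φ (1 / 2) - φ 0)) * (φ (1 / 2) - φ 0)) :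
    c ≤ 0 := by
  have hmid := hconc.2 (left_mem_Icc.2 zero_le_one) (right_mem_Icc.2 zero_le_one)
    (by norm_num : (0 : ℝ) ≤ 1 / 2) (by norm_num : (0 : ℝ) ≤ 1 / 2) (by norm_num)
  have hhalf := sub_apply_zero_pos hmono (x := 1 / 2) (by norm_num)
  norm_num at hmid hc
  nlinarith [mul_pos hhalf hhalf]

theorem isAffineOrCARA_of_map_add (hconc : ConcaveOn ℝ (Icc 0 1) φ)
    (hcont : ContinuousOn φ (Icc 0 1)) (hmono : StrictMonoOn φ (Icc 0 1)) {c : ℝ}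
    (hc : ∀ x y, 0 ≤ x → 0 ≤ y → x + y ≤ 1 →
      φ (x + y) - φ y = (1 + c * (φ y - φ 0)) * (φ x - φ 0)) :
    IsAffineOrCARA φ := by
  have hpos1 := sub_apply_zero_pos hmono (right_mem_Ioc.2 zero_lt_one)
  rcases (nonpos_of_concaveOn_of_map_add hconc hmono
    (hc _ _ (by norm_num) (by norm_num) (by norm_num))).eq_or_lt with rfl | hneg
  · have hlin := eq_mul_of_continuousOn_of_map_add (f := fun x => φ x - φ 0) (by fun_prop)
      fun x y hx hy hxy => by linear_combination hc x y hx hy hxy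
    exact ⟨φ 1 - φ 0, φ 0, hpos1, Or.inl fun x hx => by linear_combination hlin x hx⟩
  set F := fun x => 1 + c * (φ x - φ 0) with hF
  have hmul (x y : ℝ) (hx : 0 ≤ x) (hy : 0 ≤ y) (hxy : x + y ≤ 1) : F (x + y) = F x * F y := by
    simp only [hF]
    linear_combination c * hc x y hx hy hxy
  -- `F y * (φ (1 - y) - φ 0) = φ 1 - φ y > 0` for `y < 1`, and `F 1 = F (1/2) ^ 2`.
  have hpos_lt (y : ℝ) (hy : 0 ≤ y) (hy1 : y < 1) : 0 < F y := by
    have hshift := hc (1 - y) y (by linarith) hy (by linarith)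
    rw [sub_add_cancel] at hshift
    have hd := sub_apply_zero_pos hmono (x := 1 - y) ⟨by linarith, by linarith⟩
    have hinc := hmono ⟨hy, hy1.le⟩ (right_mem_Icc.2 zero_le_one) hy1
    nlinarith
  have hpos (x : ℝ) (hx : x ∈ Icc (0 : ℝ) 1) : 0 < F x := by
    rcases hx.2.lt_or_eq with hx1 | rfl
    · exact hpos_lt x hx.1 hx1
    · rw [show (1 : ℝ) = 1 / 2 + 1 / 2 by norm_num,
        hmul _ _ (by norm_num) (by norm_num) (by norm_num)]
      exact mul_pos (hpos_lt _ (by norm_num) (by norm_num)) (hpos_lt _ (by norm_num) (by norm_num))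
  have hexp := eq_exp_mul_of_continuousOn_of_map_add_eq_mul (by fun_prop) hpos hmul
  have hθ : Real.log (F 1) < 0 := Real.log_neg (hpos 1 (right_mem_Icc.2 zero_le_one)) (by
    simp only [hF]
    nlinarith)
  refine ⟨-1 / c, φ 0 - 1 / c, div_pos_of_neg_of_neg (by norm_num) hneg,
    Or.inr ⟨-Real.log (F 1), neg_pos.2 hθ, fun x hx => ?_⟩⟩
  rw [neg_neg, ← hexp x hx, hF]
  field_simp [hneg.ne]
  ring

theorem exists_map_add_eq_one_add_mul (hmono : StrictMonoOn φ (Icc 0 1)) {α β : ℝ → ℝ}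
    (h : ∀ x y, 0 ≤ x → 0 ≤ y → x + y ≤ 1 → φ (x + y) = α y * φ x + β y) :
    ∃ c, ∀ x y, 0 ≤ x → 0 ≤ y → x + y ≤ 1 →
      φ (x + y) - φ y = (1 + c * (φ y - φ 0)) * (φ x - φ 0) := by
  have hα (x y : ℝ) (hx : 0 ≤ x) (hy : 0 ≤ y) (hxy : x + y ≤ 1) :
      φ (x + y) - φ y = α y * (φ x - φ 0) := by
    have h0 := h 0 y le_rfl hy (by linarith)
    rw [zero_add] at h0
    linear_combination h x y hx hy hxy - h0
  have hsymm (x y : ℝ) (hx : 0 ≤ x) (hy : 0 ≤ y) (hxy : x + y ≤ 1) :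
      (α y - 1) * (φ x - φ 0) = (α x - 1) * (φ y - φ 0) := by
    have hyx := hα y x hy hx (by linarith)
    rw [add_comm y x] at hyx
    linear_combination hyx - hα x y hx hy hxy
  set c := (α (1 / 2) - 1) / (φ (1 / 2) - φ 0)
  have hhalf := sub_apply_zero_pos hmono (x := 1 / 2) (by norm_num)
  have hsmall (w : ℝ) (hw : w ∈ Ioc (0 : ℝ) (1 / 2)) : α w - 1 = c * (φ w - φ 0) := by
    have := hsymm w (1 / 2) hw.1.le (by norm_num) (by linarith [hw.2])
    rw [div_mul_eq_mul_div, eq_div_iff hhalf.ne']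
    linear_combination -this
  have hall (y : ℝ) (hy : 0 ≤ y) (hy1 : y < 1) : α y - 1 = c * (φ y - φ 0) := by
    set w := min (1 / 2) (1 - y)
    have hw : w ∈ Ioc (0 : ℝ) (1 / 2) := ⟨lt_min (by norm_num) (by linarith), min_le_left _ _⟩
    have hpw := sub_apply_zero_pos hmono (x := w) ⟨hw.1, by linarith [hw.2]⟩
    have := hsymm w y hw.1.le hy (by linarith [min_le_right (1 / 2) (1 - y)])
    rw [hsmall w hw] at this
    exact mul_right_cancel₀ hpw.ne' (by linear_combination this)
  refine ⟨c, fun x y hx hy hxy => ?_⟩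
  rcases hx.eq_or_lt with rfl | hx0
  · simp
  · linear_combination hα x y hx hy hxy + (φ x - φ 0) * hall y hy (by linarith)

theorem isAffineOrCARA_of_map_add_eq_mul_add (hconc : ConcaveOn ℝ (Icc 0 1) φ)
    (hcont : ContinuousOn φ (Icc 0 1)) (hmono : StrictMonoOn φ (Icc 0 1)) {α β : ℝ → ℝ}
    (h : ∀ x y, 0 ≤ x → 0 ≤ y → x + y ≤ 1 → φ (x + y) = α y * φ x + β y) :
    IsAffineOrCARA φ :=
  let ⟨_, hc⟩ := exists_map_add_eq_one_add_mul hmono h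
  isAffineOrCARA_of_map_add hconc hcont hmono hc

end AffineOrCARA

-- `k h` is the certainty equivalent of the lottery paying `h` with probability `p` and `0`
-- otherwise; translation invariance says that the lottery shifted by `x` has certainty
-- equivalent `x + k h`.
def IsShiftCertaintyEquiv (φ : ℝ → ℝ) (p : ℝ) (k : ℝ → ℝ) : Prop :=
  ∀ h x, 0 < h → 0 ≤ x → x + h ≤ 1 →
    x + k h ∈ Icc 0 1 ∧ φ (x + k h) = p * φ (x + h) + (1 - p) * φ x

section CertaintyEquivalent

variable {φ k : ℝ → ℝ} {p h x : ℝ}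

lemma iterate_mem_Ioc (hk : ∀ h ∈ Ioc (0 : ℝ) 1, k h ∈ Ioo 0 h) (hh : h ∈ Ioc (0 : ℝ) 1)
    (n : ℕ) : k^[n] h ∈ Ioc 0 h := by
  induction n with
  | zero => exact ⟨hh.1, le_rfl⟩
  | succ n ih =>
    rw [Function.iterate_succ_apply']
    have hlt := hk _ ⟨ih.1, ih.2.trans hh.2⟩
    exact ⟨hlt.1, hlt.2.le.trans ih.2⟩

lemma mem_Ioo_of_certaintyEquiv (hce : IsShiftCertaintyEquiv φ p k) (hp : p ∈ Ioo (0 : ℝ) 1)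
    (hmono : StrictMonoOn φ (Icc 0 1)) (hh : h ∈ Ioc (0 : ℝ) 1) : k h ∈ Ioo 0 h := by
  obtain ⟨hmem, heq⟩ := hce h 0 hh.1 le_rfl (by simpa using hh.2)
  simp only [zero_add] at hmem heq
  have hφ := hmono (left_mem_Icc.2 zero_le_one) (Ioc_subset_Icc_self hh) hh.1
  constructor
  · refine (hmono.lt_iff_lt (left_mem_Icc.2 zero_le_one) hmem).1 ?_
    rw [heq]
    nlinarith [hp.1]
  · refine (hmono.lt_iff_lt hmem (Ioc_subset_Icc_self hh)).1 ?_
    rw [heq]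
    nlinarith [hp.2]

lemma apply_add_iterate_sub (hce : IsShiftCertaintyEquiv φ p k)
    (hk : ∀ h ∈ Ioc (0 : ℝ) 1, k h ∈ Ioo 0 h) (hh : 0 < h) (hx : 0 ≤ x)
    (hxh : x + h ≤ 1) (n : ℕ) : φ (x + k^[n] h) - φ x = p ^ n * (φ (x + h) - φ x) := by
  induction n with
  | zero => simp
  | succ n ih =>
    have ht := iterate_mem_Ioc hk ⟨hh, by linarith⟩ n
    rw [Function.iterate_succ_apply']
    linear_combination (hce _ x ht.1 hx (by linarith [ht.2])).2 + p * ih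

lemma tendsto_iterate_nhdsGT_zero (hce : IsShiftCertaintyEquiv φ p k) (hp : p ∈ Ioo (0 : ℝ) 1)
    (hcont : ContinuousOn φ (Icc 0 1)) (hmono : StrictMonoOn φ (Icc 0 1))
    (hk : ∀ h ∈ Ioc (0 : ℝ) 1, k h ∈ Ioo 0 h) (hh : h ∈ Ioc (0 : ℝ) 1) : Tendsto (fun n => k^[n] h) atTop (𝓝[>] 0) := by
  have ht := iterate_mem_Ioc hk hh
  have hanti : Antitone fun n => k^[n] h := antitone_nat_of_succ_le fun n => by
    rw [Function.iterate_succ_apply']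
    exact (hk _ ⟨(ht n).1, (ht n).2.trans hh.2⟩).2.le
  have hbdd : BddBelow (range fun n => k^[n] h) := ⟨0, by rintro _ ⟨n, rfl⟩; exact (ht n).1.le⟩
  have hlim := tendsto_atTop_ciInf hanti hbdd
  set l := ⨅ n, k^[n] h
  have hl : l ∈ Icc (0 : ℝ) 1 := ⟨le_ciInf fun n => (ht n).1.le, (ciInf_le hbdd 0).trans hh.2⟩
  -- `φ (k^[n] h)` tends to `φ l` by continuity, and to `φ 0` since `φ (k^[n] h) - φ 0 = p ^ n * _`.
  have hφl : Tendsto (fun n => φ (k^[n] h)) atTop (𝓝 (φ l)) :=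
    (hcont l hl).tendsto.comp (tendsto_nhdsWithin_iff.2
      ⟨hlim, Eventually.of_forall fun n => ⟨(ht n).1.le, (ht n).2.trans hh.2⟩⟩)
  have hφ0 : Tendsto (fun n => φ (k^[n] h)) atTop (𝓝 (φ 0)) := by
    have hpow := ((tendsto_pow_atTop_nhds_zero_of_lt_one hp.1.le hp.2).mul_const
      (φ h - φ 0)).const_add (φ 0)
    rw [zero_mul, add_zero] at hpow
    refine hpow.congr fun n => ?_
    have hsub := apply_add_iterate_sub hce hk hh.1 le_rfl (by simpa using hh.2) n
    simp only [zero_add] at hsub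
    linarith
  have hl0 : l = 0 := hmono.injOn hl (left_mem_Icc.2 zero_le_one) (tendsto_nhds_unique hφl hφ0)
  exact tendsto_nhdsWithin_iff.2 ⟨hl0 ▸ hlim, Eventually.of_forall fun n => (ht n).1⟩

lemma mul_slope_iterate (hce : IsShiftCertaintyEquiv φ p k)
    (hk : ∀ h ∈ Ioc (0 : ℝ) 1, k h ∈ Ioo 0 h) (hh : 0 < h) (hx : 0 ≤ x)
    (hxh : x + h ≤ 1) (n : ℕ) :
    (φ (x + h) - φ x) * slope φ 0 (k^[n] h) = (φ h - φ 0) * slope φ x (x + k^[n] h) := by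
  have hsubx := apply_add_iterate_sub hce hk hh hx hxh n
  have hsub0 := apply_add_iterate_sub hce hk hh le_rfl (by linarith) n
  simp only [zero_add] at hsub0
  simp only [slope_def_field, add_sub_cancel_left, sub_zero]
  rw [hsubx, hsub0]
  ring

lemma bddAbove_slope_zero (hce : IsShiftCertaintyEquiv φ p k) (hp : p ∈ Ioo (0 : ℝ) 1)
    (hconc : ConcaveOn ℝ (Icc 0 1) φ) (hcont : ContinuousOn φ (Icc 0 1))
    (hmono : StrictMonoOn φ (Icc 0 1)) (hk : ∀ h ∈ Ioc (0 : ℝ) 1, k h ∈ Ioo 0 h) :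
    BddAbove (slope φ 0 '' Ioo 0 1) := by
  have h0 : (0 : ℝ) ∈ Icc 0 1 := left_mem_Icc.2 zero_le_one
  have hhalf : (1 / 2 : ℝ) ∈ Icc 0 1 := by norm_num
  have hgap : 0 < φ 1 - φ (1 / 2) :=
    sub_pos.2 (hmono hhalf (right_mem_Icc.2 zero_le_one) (by norm_num))
  have hpos := sub_apply_zero_pos hmono (x := 1 / 2) (by norm_num)
  have ht := iterate_mem_Ioc hk (h := 1 / 2) (by norm_num)
  -- Along `k^[n] (1/2)` the slopes of `φ` at `0` are proportional to those at `1/2`.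
  set C := (φ (1 / 2) - φ 0) * slope φ 0 (1 / 2) / (φ 1 - φ (1 / 2))
  have hbound (n : ℕ) : slope φ 0 (k^[n] (1 / 2)) ≤ C := by
    have hid := mul_slope_iterate hce hk (x := 1 / 2) (h := 1 / 2) (by norm_num) (by norm_num)
      (by norm_num) n
    norm_num at hid
    have hsl : slope φ (1 / 2) (1 / 2 + k^[n] (1 / 2)) ≤ slope φ 0 (1 / 2) := by
      rw [slope_comm φ 0]
      exact hconc.slope_anti hhalf ⟨h0, by norm_num⟩
        ⟨⟨by linarith [(ht n).1], by linarith [(ht n).2]⟩, by simpa using (ht n).1.ne'⟩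
        (by linarith [(ht n).1])
    rw [le_div_iff₀ hgap]
    nlinarith [mul_le_mul_of_nonneg_left hsl hpos.le]
  refine ⟨C, ?_⟩
  rintro _ ⟨τ, hτ, rfl⟩
  have ht0 := tendsto_iterate_nhdsGT_zero hce hp hcont hmono hk (h := 1 / 2) (by norm_num)
  obtain ⟨n, hn⟩ := (ht0.eventually (Ioo_mem_nhdsGT hτ.1)).exists
  exact (hconc.antitoneOn_slope_gt h0 ⟨⟨hn.1.le, hn.2.le.trans hτ.2.le⟩, hn.1⟩
    ⟨⟨hτ.1.le, hτ.2.le⟩, hτ.1⟩ hn.2.le).trans (hbound n)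

-- The witness `d x` is the right derivative of `φ` at `x`; the identity is the limit of
-- `mul_slope_iterate` as `k^[n] h → 0`.
lemma exists_mul_eq_mul_rightDeriv (hce : IsShiftCertaintyEquiv φ p k) (hp : p ∈ Ioo (0 : ℝ) 1)
    (hconc : ConcaveOn ℝ (Icc 0 1) φ) (hcont : ContinuousOn φ (Icc 0 1))
    (hmono : StrictMonoOn φ (Icc 0 1)) :
    ∃ d : ℝ → ℝ, 0 < d 0 ∧ ∀ x h, 0 ≤ x → 0 < h → x + h ≤ 1 →
      (φ (x + h) - φ x) * d 0 = (φ h - φ 0) * d x := by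
  have hk (h : ℝ) (hh : h ∈ Ioc (0 : ℝ) 1) := mem_Ioo_of_certaintyEquiv hce hp hmono hh
  have h0 : (0 : ℝ) ∈ Icc 0 1 := left_mem_Icc.2 zero_le_one
  have hbdd (x : ℝ) (hx : x ∈ Ico (0 : ℝ) 1) : BddAbove (slope φ x '' Ioo x 1) := by
    rcases hx.1.eq_or_lt with rfl | hx0
    · exact bddAbove_slope_zero hce hp hconc hcont hmono hk
    · refine ⟨slope φ 0 x, ?_⟩
      rintro _ ⟨y, hy, rfl⟩
      rw [slope_comm φ 0]
      exact hconc.slope_anti (Ico_subset_Icc_self hx) ⟨h0, by simpa using hx0.ne⟩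
        ⟨⟨by linarith [hy.1], hy.2.le⟩, by simpa using hy.1.ne'⟩ (by linarith [hy.1])
  have hd (x : ℝ) (hx : x ∈ Ico (0 : ℝ) 1) :
      Tendsto (slope φ x) (𝓝[>] x) (𝓝 (sSup (slope φ x '' Ioo x 1))) :=
    hconc.tendsto_slope_nhdsGT (Ico_subset_Icc_self hx) hx.2
      (fun y hy => ⟨by linarith [hx.1, hy.1], hy.2.le⟩) (hbdd x hx)
  refine ⟨fun x => sSup (slope φ x '' Ioo x 1), ?_, fun x h hx hh hxh => ?_⟩
  · have hslope : 0 < slope φ 0 (1 / 2) := by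
      rw [slope_def_field]
      exact div_pos (sub_apply_zero_pos hmono (by norm_num)) (by norm_num)
    exact hslope.trans_le (le_csSup (hbdd 0 ⟨le_rfl, one_pos⟩) ⟨1 / 2, by norm_num, rfl⟩)
  · have ht := tendsto_iterate_nhdsGT_zero hce hp hcont hmono hk ⟨hh, by linarith⟩
    have hshift : Tendsto (x + ·) (𝓝[>] 0) (𝓝[>] x) := by
      have hmap := Filter.map_add_left_nhdsGT (c := x) (a := (0 : ℝ))
      rw [add_zero] at hmap
      exact hmap.le
    exact tendsto_nhds_unique (((hd 0 ⟨le_rfl, one_pos⟩).comp ht).const_mul _)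
      ((((hd x ⟨hx, by linarith⟩).comp (hshift.comp ht)).const_mul _).congr fun n =>
        (mul_slope_iterate hce hk hh hx hxh n).symm)

theorem isAffineOrCARA_of_certaintyEquiv (hce : IsShiftCertaintyEquiv φ p k)
    (hp : p ∈ Ioo (0 : ℝ) 1) (hconc : ConcaveOn ℝ (Icc 0 1) φ)
    (hcont : ContinuousOn φ (Icc 0 1)) (hmono : StrictMonoOn φ (Icc 0 1)) :
    IsAffineOrCARA φ := by
  obtain ⟨d, hd0, hd⟩ := exists_mul_eq_mul_rightDeriv hce hp hconc hcont hmono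
  refine isAffineOrCARA_of_map_add_eq_mul_add hconc hcont hmono (α := fun y => d y / d 0)
    (β := fun y => φ y - d y / d 0 * φ 0) fun x y hx hy hxy => ?_
  rcases hx.eq_or_lt with rfl | hx0
  · simp
  · have hyx := hd y x hy hx0 (by linarith)
    rw [add_comm y x] at hyx
    field_simp
    linear_combination hyx

end CertaintyEquivalent

lemma integral_comp_indicator_add {Y : Type*} [MeasurableSpace Y] (π : Measure Y)
    [IsProbabilityMeasure π] {A : Set Y} (hA : MeasurableSet A) (φ : ℝ → ℝ) (h x : ℝ) :
    ∫ y, φ (A.indicator (fun _ => h) y + x) ∂π = π.real A * φ (h + x) + (1 - π.real A) * φ x := by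
  have hsplit : (fun y => φ (A.indicator (fun _ => h) y + x))
      = fun y => A.indicator (fun _ => φ (h + x) - φ x) y + φ x := by
    ext y
    by_cases hy : y ∈ A <;> simp [hy]
  rw [hsplit, integral_add ((integrable_const _).indicator hA) (integrable_const _),
    integral_indicator_const _ hA, integral_const]
  simp only [smul_eq_mul, probReal_univ, one_mul]
  ring

lemma mem_Icc_and_apply_eq {φ ψ : ℝ → ℝ} (hcont : ContinuousOn φ (Icc 0 1))
    (hinv : ∀ x ∈ Icc (0 : ℝ) 1, ψ (φ x) = x) {v : ℝ} (hv : v ∈ Icc (φ 0) (φ 1)) :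
    ψ v ∈ Icc 0 1 ∧ φ (ψ v) = v := by
  obtain ⟨t, ht, rfl⟩ := intermediate_value_Icc zero_le_one hcont hv
  rw [hinv t ht]
  exact ⟨ht, rfl⟩

theorem isShiftCertaintyEquiv_of_translationInvariant {Y : Type*} [MeasurableSpace Y]
    (π : Measure Y) [IsProbabilityMeasure π] {A : Set Y} (hA : MeasurableSet A) {φ ψ : ℝ → ℝ}
    (hcont : ContinuousOn φ (Icc 0 1)) (hmono : StrictMonoOn φ (Icc 0 1))
    (hinv : ∀ x ∈ Icc (0 : ℝ) 1, ψ (φ x) = x)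
    (hTI : ∀ ξ : Y → ℝ, Measurable ξ → (∀ y, ξ y ∈ Icc (0 : ℝ) 1) →
      ∀ c : ℝ, (∀ y, ξ y + c ∈ Icc (0 : ℝ) 1) →
        ψ (∫ y, φ (ξ y + c) ∂π) = ψ (∫ y, φ (ξ y) ∂π) + c) :
    IsShiftCertaintyEquiv φ (π.real A) fun h => ψ (π.real A * φ h + (1 - π.real A) * φ 0) := by
  intro h x hh hx hxh
  set p := π.real A
  have hmem (c : ℝ) (hc : 0 ≤ c) (hch : c + h ≤ 1) (y : Y) :
      A.indicator (fun _ => h) y + c ∈ Icc (0 : ℝ) 1 := by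
    by_cases hy : y ∈ A <;>
      simp only [hy, indicator_of_mem, indicator_of_notMem, not_false_eq_true, zero_add,
        mem_Icc] <;>
      constructor <;> linarith
  have hshift := hTI _ (measurable_const.indicator hA)
    (fun y => by simpa using hmem 0 le_rfl (by linarith) y) x (hmem x hx (by linarith))
  have hint0 := integral_comp_indicator_add π hA φ h 0
  simp only [add_zero] at hint0
  rw [integral_comp_indicator_add π hA φ h x, hint0] at hshift
  have hφ : φ 0 ≤ φ x ∧ φ x ≤ φ (h + x) ∧ φ (h + x) ≤ φ 1 :=
    ⟨hmono.monotoneOn (left_mem_Icc.2 zero_le_one) ⟨hx, by linarith⟩ hx,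
      hmono.monotoneOn ⟨hx, by linarith⟩ ⟨by linarith, by linarith⟩ (by linarith),
      hmono.monotoneOn ⟨by linarith, by linarith⟩ (right_mem_Icc.2 zero_le_one) (by linarith)⟩
  have hp : 0 ≤ p ∧ p ≤ 1 := ⟨measureReal_nonneg, measureReal_le_one⟩
  obtain ⟨hψ, hφψ⟩ := mem_Icc_and_apply_eq hcont hinv
    (v := p * φ (h + x) + (1 - p) * φ x) ⟨by nlinarith, by nlinarith⟩
  rw [hshift, add_comm _ x] at hψ hφψ
  rw [add_comm h x] at hφψ
  exact ⟨hψ, hφψ⟩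

theorem stmt7_general {Y : Type*} (ℬ : MeasurableSpace Y)
    (π : Measure Y) [IsProbabilityMeasure π]
    (A : Set Y) (hA : MeasurableSet[ℬ] A)
    (hp : π A ∈ Set.Ioo (0 : ℝ≥0∞) 1)
    (φ ψ : ℝ → ℝ)
    (hconc : ConcaveOn ℝ (Set.Icc 0 1) φ)
    (hcont : ContinuousOn φ (Set.Icc 0 1))
    (hmono : StrictMonoOn φ (Set.Icc 0 1))
    (hinv : ∀ x ∈ Set.Icc (0 : ℝ) 1, ψ (φ x) = x)
    (hTI : ∀ ξ : Y → ℝ, Measurable[ℬ] ξ → (∀ y, ξ y ∈ Set.Icc (0 : ℝ) 1) →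
      ∀ c : ℝ, (∀ y, ξ y + c ∈ Set.Icc (0 : ℝ) 1) →
        ψ (∫ y, φ (ξ y + c) ∂π) = ψ (∫ y, φ (ξ y) ∂π) + c) :
    ∃ α γ : ℝ, 0 < α ∧
      ((∀ x ∈ Set.Icc (0 : ℝ) 1, φ x = α * x + γ) ∨
        ∃ θ : ℝ, 0 < θ ∧ ∀ x ∈ Set.Icc (0 : ℝ) 1,
          φ x = α * (-Real.exp (-θ * x)) + γ) := by
  have hpReal : π.real A ∈ Ioo (0 : ℝ) 1 := by
    rw [measureReal_def]
    refine ⟨ENNReal.toReal_pos hp.1.ne' (measure_ne_top π A), ?_⟩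
    simpa using (ENNReal.toReal_lt_toReal (measure_ne_top π A) ENNReal.one_ne_top).2 hp.2
  exact isAffineOrCARA_of_certaintyEquiv
    (isShiftCertaintyEquiv_of_translationInvariant π hA hcont hmono hinv hTI) hpReal hconc hcont
    hmono

/-- Lemma `auxiliary_lemma_smooth`: a concave, continuous, strictly
increasing `φ` on `[0,1]` whose expected-utility certainty equivalent
`I(ξ) = φ⁻¹(∫ φ(ξ) dπ)` (on bounded `ℬ`-measurable `[0,1]`-valued functions,
for a sub-σ-algebra `ℬ` containing an event of probability strictly between 0
and 1) is translation invariant must be, up to a positive affine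
transformation, the identity or `x ↦ −exp(−θx)` with `θ > 0`. -/
theorem stmt7 {Y : Type*} {m0 : MeasurableSpace Y} (ℬ : MeasurableSpace Y)
    (hsub : ℬ ≤ m0)
    (π : Measure Y) [IsProbabilityMeasure π]
    (A : Set Y) (hA : MeasurableSet[ℬ] A)
    (hp : π A ∈ Set.Ioo (0 : ℝ≥0∞) 1)
    (φ ψ : ℝ → ℝ)
    (hconc : ConcaveOn ℝ (Set.Icc 0 1) φ)
    (hcont : ContinuousOn φ (Set.Icc 0 1))
    (hmono : StrictMonoOn φ (Set.Icc 0 1))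
    (hinv : ∀ x ∈ Set.Icc (0 : ℝ) 1, ψ (φ x) = x)
    (hTI : ∀ ξ : Y → ℝ, Measurable[ℬ] ξ → (∀ y, ξ y ∈ Set.Icc (0 : ℝ) 1) →
      ∀ c : ℝ, (∀ y, ξ y + c ∈ Set.Icc (0 : ℝ) 1) →
        ψ (∫ y, φ (ξ y + c) ∂π) = ψ (∫ y, φ (ξ y) ∂π) + c) :
    ∃ α γ : ℝ, 0 < α ∧
      ((∀ x ∈ Set.Icc (0 : ℝ) 1, φ x = α * x + γ) ∨
        ∃ θ : ℝ, 0 < θ ∧ ∀ x ∈ Set.Icc (0 : ℝ) 1,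
          φ x = α * (-Real.exp (-θ * x)) + γ) :=
  stmt7_general ℬ π A hA hp φ ψ hconc hcont hmono hinv hTI
end

section
/- A monotone, normalized, quasi-concave, translation-invariant functional I on the space of bounded measurable real-valued functions is concave. -/
/-- MMR Lemma 25: a monotone, normalized, quasi-concave,
translation-invariant functional on the space of bounded measurable real-valued
functions is concave. -/
theorem stmt10 {Ω : Type*} [MeasurableSpace Ω]
    (B : Set (Ω → ℝ))
    (hB : B = {ξ | Measurable ξ ∧ ∃ M : ℝ, ∀ ω, |ξ ω| ≤ M})
    (I : (Ω → ℝ) → ℝ)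
    (hmono : ∀ ξ ∈ B, ∀ ξ' ∈ B, (∀ ω, ξ' ω ≤ ξ ω) → I ξ' ≤ I ξ)
    (hnorm : ∀ k : ℝ, I (fun _ => k) = k)
    (hTI : ∀ ξ ∈ B, ∀ c : ℝ, I (fun ω => ξ ω + c) = I ξ + c)
    (hqc : ∀ ξ ∈ B, ∀ ξ' ∈ B, ∀ α : ℝ, 0 ≤ α → α ≤ 1 →
      min (I ξ) (I ξ') ≤ I (fun ω => α * ξ ω + (1 - α) * ξ' ω)) :
    ∀ ξ ∈ B, ∀ ξ' ∈ B, ∀ α : ℝ, 0 ≤ α → α ≤ 1 →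
      α * I ξ + (1 - α) * I ξ' ≤ I (fun ω => α * ξ ω + (1 - α) * ξ' ω) := by
  intro ξ hξ ξ' hξ' α hα0 hα1
  set c : ℝ := I ξ - I ξ' with hc
  -- membership facts
  obtain ⟨hξm, Mξ, hMξ⟩ : Measurable ξ ∧ ∃ M : ℝ, ∀ ω, |ξ ω| ≤ M := by
    rw [hB] at hξ; exact hξ
  obtain ⟨hξ'm, Mξ', hMξ'⟩ : Measurable ξ' ∧ ∃ M : ℝ, ∀ ω, |ξ' ω| ≤ M := by
    rw [hB] at hξ'; exact hξ'
  have hξ''B : (fun ω => ξ' ω + c) ∈ B := by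
    rw [hB]
    refine ⟨(hξ'm).add_const c, Mξ' + |c|, fun ω => ?_⟩
    calc |ξ' ω + c| ≤ |ξ' ω| + |c| := abs_add_le _ _
      _ ≤ Mξ' + |c| := by linarith [hMξ' ω]
  have hcombB : (fun ω => α * ξ ω + (1 - α) * ξ' ω) ∈ B := by
    rw [hB]
    refine ⟨(hξm.const_mul α).add (hξ'm.const_mul (1 - α)), Mξ + Mξ', fun ω => ?_⟩
    have h1 := hMξ ω; have h2 := hMξ' ω
    have : |α * ξ ω + (1 - α) * ξ' ω| ≤ |α * ξ ω| + |(1 - α) * ξ' ω| := abs_add_le _ _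
    rw [abs_mul, abs_mul, abs_of_nonneg hα0, abs_of_nonneg (by linarith : (0:ℝ) ≤ 1 - α)] at this
    nlinarith [abs_nonneg (ξ ω), abs_nonneg (ξ' ω)]
  have hIξ'' : I (fun ω => ξ' ω + c) = I ξ := by
    rw [hTI ξ' hξ' c]; simp [hc]
  have hq := hqc ξ hξ _ hξ''B α hα0 hα1
  rw [hIξ'', min_self] at hq
  have heq : (fun ω => α * ξ ω + (1 - α) * (ξ' ω + c))
      = fun ω => (α * ξ ω + (1 - α) * ξ' ω) + (1 - α) * c := by
    funext ω; ring
  rw [heq, hTI _ hcombB ((1 - α) * c)] at hq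
  have : α * I ξ + (1 - α) * I ξ' = I ξ - (1 - α) * c := by rw [hc]; ring
  linarith
end
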